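/- Gallai-Edmonds matching structure: for any maximum matching M of a bipartite graph G1, every odd vertex is matched by M to an even vertex, every unreachable vertex is matched by M to another unreachable vertex, and the size of M equals |O| + |U|/2, where O and U are the sets of odd and unreachable vertices. -/

import Mathlib

universe u v

/-- A matching assigns to each person at most one item, injectively on items. -/
def IsMatching {α β : Type*} (M : α → Option β) : Prop :=
  ∀ a a' b, M a = some b → M a' = some b → a = a'

/-- A matching using only edges of the bipartite graph `E`. -/
def IsMatchingOn {α β : Type*} (E : α → β → Prop) (M : α → Option β) : Prop :=
  (∀ a b, M a = some b → E a b) ∧ IsMatching M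

/-- Number of matched people (= number of edges of the matching). -/
noncomputable def msize {α β : Type*} [Fintype α] (M : α → Option β) : ℕ :=
  Nat.card {a // (M a).isSome}

/-- A maximum cardinality matching of the bipartite graph `E`. -/
def IsMaxMatchingOn {α β : Type*} [Fintype α] (E : α → β → Prop) (M : α → Option β) : Prop :=
  IsMatchingOn E M ∧ ∀ M', IsMatchingOn E M' → msize M' ≤ msize M

mutual
  /-- A person reachable from an `M`-unmatched vertex by an even-length alternating path
  (such paths start at an unmatched person). -/
  inductive EvenA {α : Type u} {β : Type v} (E : α → β → Prop) (M : α → Option β) : α → Prop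
    | base (a : α) : M a = none → EvenA E M a
    | step (a : α) (b : β) : OddB E M b → M a = some b → EvenA E M a
  /-- An item reachable from an `M`-unmatched vertex by an odd-length alternating path. -/
  inductive OddB {α : Type u} {β : Type v} (E : α → β → Prop) (M : α → Option β) : β → Prop
    | step (a : α) (b : β) : EvenA E M a → E a b → M a ≠ some b → OddB E M b
end

mutual
  /-- An item reachable from an `M`-unmatched vertex by an even-length alternating path
  (such paths start at an unmatched item). -/
  inductive EvenB {α : Type u} {β : Type v} (E : α → β → Prop) (M : α → Option β) : β → Prop
    | base (b : β) : (∀ a, M a ≠ some b) → EvenB E M b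
    | step (a : α) (b : β) : OddA E M a → M a = some b → EvenB E M b
  /-- A person reachable from an `M`-unmatched vertex by an odd-length alternating path. -/
  inductive OddA {α : Type u} {β : Type v} (E : α → β → Prop) (M : α → Option β) : α → Prop
    | step (a : α) (b : β) : EvenB E M b → E a b → M a ≠ some b → OddA E M a
end

/-- An unreachable person: no alternating path from an unmatched vertex reaches it. -/
def UnreachA {α β : Type*} (E : α → β → Prop) (M : α → Option β) (a : α) : Prop :=
  ¬ EvenA E M a ∧ ¬ OddA E M a

/-- An unreachable item: no alternating path from an unmatched vertex reaches it. -/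
def UnreachB {α β : Type*} (E : α → β → Prop) (M : α → Option β) (b : β) : Prop :=
  ¬ EvenB E M b ∧ ¬ OddB E M b

/-!
In a maximum matching no edge outside `M` joins an even person to an even item, for the two
alternating paths would combine into an augmenting one (Berge). Hence an odd vertex is matched, as
it would otherwise be even as well, and along a matching edge the evenness of one end is the oddness
of the other; so the unreachable vertices are matched among themselves. Counting the matched
people by class, the mates of the even ones are exactly the odd items, so
`|M| = |O_B| + |O_A| + |U_A|`, while `|U_A| = |U_B|`.
-/

section GallaiEdmonds

variable {α : Type u} {β : Type v} {E : α → β → Prop} {M : α → Option β}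

/-- `EvenAAt E M n a`: an `M`-alternating path with exactly `n` matching edges runs from an
unmatched person to `a`. -/
def EvenAAt (E : α → β → Prop) (M : α → Option β) : ℕ → α → Prop
  | 0, a => M a = none
  | n + 1, a => ∃ b a', M a = some b ∧ EvenAAt E M n a' ∧ E a' b ∧ M a' ≠ some b

theorem EvenA.exists_evenAAt {a : α} (h : EvenA E M a) : ∃ n, EvenAAt E M n a := by
  refine EvenA.rec (motive_1 := fun a _ => ∃ n, EvenAAt E M n a)
    (motive_2 := fun b _ => ∃ n a', EvenAAt E M n a' ∧ E a' b ∧ M a' ≠ some b) ?_ ?_ ?_ h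
  · exact fun a ha => ⟨0, ha⟩
  · rintro a b - hab ⟨n, a', ha', hE, hne⟩
    exact ⟨n + 1, b, a', hab, ha', hE, hne⟩
  · rintro a b - hE hne ⟨n, ha⟩
    exact ⟨n, a, ha, hE, hne⟩

-- A path with `n` matching edges never visits `a`, so it does not see how `M` changed there.
theorem EvenAAt.of_eq_of_ne {M' : α → Option β} {a : α} (hM' : ∀ x, x ≠ a → M' x = M x) :
    ∀ {n x}, (∀ k ≤ n, ¬ EvenAAt E M k a) → EvenAAt E M n x → EvenAAt E M' n x
  | 0, x, hfar, hx => by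
    rw [EvenAAt, hM' x (by rintro rfl; exact hfar 0 le_rfl hx)]
    exact hx
  | n + 1, x, hfar, hx => by
    obtain ⟨b, x', hxb, hx', hE, hne⟩ := hx
    have hxa : x ≠ a := by rintro rfl; exact hfar (n + 1) le_rfl ⟨b, x', hxb, hx', hE, hne⟩
    have hx'a : x' ≠ a := by rintro rfl; exact hfar n n.le_succ hx'
    refine ⟨b, x', (hM' x hxa).trans hxb, ?_, hE, (hM' x' hx'a).symm ▸ hne⟩
    exact EvenAAt.of_eq_of_ne hM' (fun k hk => hfar k (hk.trans n.le_succ)) hx'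

theorem IsMatchingOn.update_of_forall_ne [DecidableEq α] {a : α} {b : β}
    (hM : IsMatchingOn E M) (hab : E a b) (hb : ∀ x, M x ≠ some b) : IsMatchingOn E (Function.update M a (some b)) := by
  refine ⟨fun x c hx => ?_, fun x y c hx hy => ?_⟩
  · rcases eq_or_ne x a with rfl | hxa
    · obtain rfl : b = c := by simpa using hx
      exact hab
    · exact hM.1 x c (by simpa [hxa] using hx)
  · simp only [Function.update_apply] at hx hy
    split_ifs at hx hy with hxa hya hya
    · rw [hxa, hya]
    · exact absurd (Option.some.inj hx ▸ hy) (hb y)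
    · exact absurd (Option.some.inj hy ▸ hx) (hb x)
    · exact hM.2 x y c hx hy

theorem msize_update_of_isSome [Fintype α] [DecidableEq α] {a : α} (b : β)
    (ha : (M a).isSome) : msize (Function.update M a (some b)) = msize M :=
  Nat.card_congr <| Equiv.subtypeEquivRight fun x => by
    rcases eq_or_ne x a with rfl | hxa <;> simp [*]

theorem msize_lt_update_of_eq_none [Fintype α] [DecidableEq α] {a : α} (b : β)
    (ha : M a = none) : msize M < msize (Function.update M a (some b)) := by
  refine Set.ncard_lt_ncard (s := {x | (M x).isSome}) ⟨fun x hx => ?_, fun h => ?_⟩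
  · show (Function.update M a (some b) x).isSome
    rcases eq_or_ne x a with rfl | hxa <;> simp_all
  · simpa [ha] using h (show a ∈ {x | (Function.update M a (some b) x).isSome} by simp)

/-- Berge's augmenting path argument, by induction along a shortest alternating path to `a`:
rematching `a` to `b` frees its former mate, which is adjacent to the previous person on the path.
The path is taken shortest so that this rematching leaves the rest of it alternating. -/
theorem IsMatchingOn.exists_msize_lt_of_evenAAt [Fintype α] (hM : IsMatchingOn E M) {n : ℕ}
    {a : α} {b : β} (ha : EvenAAt E M n a) (hab : E a b) (hb : ∀ x, M x ≠ some b) :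
    ∃ M', IsMatchingOn E M' ∧ msize M < msize M' := by
  classical
  induction n using Nat.strong_induction_on generalizing M a b with
  | _ n ih =>
  by_cases hshort : ∃ k < n, EvenAAt E M k a
  · obtain ⟨k, hk, hka⟩ := hshort
    exact ih k hk hM hka hab hb
  push Not at hshort
  set M₁ := Function.update M a (some b)
  have hM₁ : IsMatchingOn E M₁ := hM.update_of_forall_ne hab hb
  cases n with
  | zero => exact ⟨M₁, hM₁, msize_lt_update_of_eq_none b ha⟩
  | succ n =>
    obtain ⟨b', a', hab', ha', hE', -⟩ := ha
    have hb' : ∀ x, M₁ x ≠ some b' := by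
      intro x hx
      rcases eq_or_ne x a with rfl | hxa
      · obtain rfl : b = b' := by simpa [M₁] using hx
        exact hb x hab'
      · exact hxa (hM.2 x a b' (by simpa [M₁, hxa] using hx) hab')
    have ha'₁ : EvenAAt E M₁ n a' :=
      EvenAAt.of_eq_of_ne (fun x hx => Function.update_of_ne hx _ _)
        (fun k hk => hshort k (Nat.lt_succ_of_le hk)) ha'
    obtain ⟨M', hM', hlt⟩ := ih n n.lt_succ_self hM₁ ha'₁ hE' hb'
    exact ⟨M', hM', (msize_update_of_isSome (a := a) b (by simp [hab'])).symm.trans_lt hlt⟩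

theorem IsMaxMatchingOn.exists_eq_some_of_evenA [Fintype α] (hM : IsMaxMatchingOn E M)
    {a : α} {b : β} (ha : EvenA E M a) (hab : E a b) : ∃ x, M x = some b := by
  by_contra! hb
  obtain ⟨n, ha⟩ := ha.exists_evenAAt
  obtain ⟨M', hM', hlt⟩ := hM.1.exists_msize_lt_of_evenAAt ha hab hb
  exact (hM.2 M' hM').not_gt hlt

/-- Induction along the alternating path from a free item to `b`: the evenness of `a` propagates
backwards along it, until an even person is adjacent to a free item. -/
theorem IsMaxMatchingOn.eq_some_of_evenA_of_evenB [Fintype α] (hM : IsMaxMatchingOn E M)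
    {a : α} {b : β} (ha : EvenA E M a) (hb : EvenB E M b) (hab : E a b) : M a = some b := by
  revert a
  refine EvenB.rec (motive_1 := fun b _ => ∀ {a}, EvenA E M a → E a b → M a = some b)
    (motive_2 := fun a' _ => ∀ {b' a}, M a' = some b' → EvenA E M a → E a b' → M a = some b')
    ?_ ?_ ?_ hb
  · intro b hfree a ha hab
    obtain ⟨x, hx⟩ := hM.exists_eq_some_of_evenA ha hab
    exact (hfree x hx).elim
  · intro a' b _ ha'b ih a ha hab
    exact ih ha'b ha hab
  · intro a₃ b₃ _ hE₃ hne₃ ih b₂ a ha₃b₂ ha hab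
    by_contra hne
    exact hne₃ (ih (EvenA.step a₃ b₂ (OddB.step a b₂ ha hab hne) ha₃b₂) hE₃)

theorem IsMaxMatchingOn.not_evenA_of_oddA [Fintype α] (hM : IsMaxMatchingOn E M) {a : α}
    (h : OddA E M a) : ¬ EvenA E M a := by
  cases h with
  | step _ b hb hab hne => exact fun ha => hne (hM.eq_some_of_evenA_of_evenB ha hb hab)

theorem IsMaxMatchingOn.not_evenB_of_oddB [Fintype α] (hM : IsMaxMatchingOn E M) {b : β}
    (h : OddB E M b) : ¬ EvenB E M b := by
  cases h with
  | step a _ ha hab hne => exact fun hb => hne (hM.eq_some_of_evenA_of_evenB ha hb hab)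

theorem IsMaxMatchingOn.isSome_of_oddA [Fintype α] (hM : IsMaxMatchingOn E M) {a : α}
    (h : OddA E M a) : (M a).isSome := by
  by_contra hfree
  exact hM.not_evenA_of_oddA h (EvenA.base a (by simpa using hfree))

theorem IsMaxMatchingOn.exists_eq_some_of_oddB [Fintype α] (hM : IsMaxMatchingOn E M) {b : β}
    (h : OddB E M b) : ∃ a, M a = some b := by
  by_contra! hfree
  exact hM.not_evenB_of_oddB h (EvenB.base b hfree)

theorem UnreachA.isSome {a : α} (h : UnreachA E M a) : (M a).isSome := by
  by_contra hfree
  exact h.1 (EvenA.base a (by simpa using hfree))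

theorem UnreachB.exists_eq_some {b : β} (h : UnreachB E M b) : ∃ a, M a = some b := by
  by_contra! hfree
  exact h.1 (EvenB.base b hfree)

theorem evenA_iff_oddB_of_eq_some {a : α} {b : β} (hab : M a = some b) :
    EvenA E M a ↔ OddB E M b := by
  refine ⟨fun ha => ?_, fun hb => EvenA.step a b hb hab⟩
  cases ha with
  | base _ hfree => simp [hfree] at hab
  | step _ b' hb' hab' => exact Option.some.inj (hab'.symm.trans hab) ▸ hb'

theorem IsMatching.evenB_iff_oddA (hM : IsMatching M) {a : α} {b : β} (hab : M a = some b) :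
    EvenB E M b ↔ OddA E M a := by
  refine ⟨fun hb => ?_, fun ha => EvenB.step a b ha hab⟩
  cases hb with
  | base _ hfree => exact (hfree a hab).elim
  | step a' _ ha' ha'b => exact hM a' a b ha'b hab ▸ ha'

theorem IsMatching.unreachA_iff_unreachB (hM : IsMatching M) {a : α} {b : β}
    (hab : M a = some b) : UnreachA E M a ↔ UnreachB E M b := by
  rw [UnreachA, UnreachB, evenA_iff_oddB_of_eq_some hab, hM.evenB_iff_oddA hab, and_comm]

theorem IsMatching.card_eq_card {P : α → Prop} {Q : β → Prop} (hM : IsMatching M)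
    (hP : ∀ a, P a → (M a).isSome) (hQ : ∀ b, Q b → ∃ a, M a = some b)
    (hPQ : ∀ a b, M a = some b → (P a ↔ Q b)) : Nat.card {a // P a} = Nat.card {b // Q b} := by
  refine Nat.card_eq_of_bijective
    (fun a => ⟨(M a).get (hP a a.2), (hPQ a _ (Option.some_get _).symm).1 a.2⟩) ⟨?_, ?_⟩
  · rintro ⟨x, hx⟩ ⟨y, hy⟩ hxy
    simp only [Subtype.mk.injEq] at hxy
    exact Subtype.ext (hM x y _ (Option.some_get _).symm (hxy.symm ▸ (Option.some_get _).symm))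
  · rintro ⟨b, hb⟩
    obtain ⟨a, hab⟩ := hQ b hb
    exact ⟨⟨a, (hPQ a b hab).2 hb⟩, Subtype.ext (by simp [hab])⟩

theorem Nat.card_subtype_or_of_imp_not [Finite α] {p q : α → Prop} (h : ∀ a, p a → ¬ q a) :
    Nat.card {a // p a ∨ q a} = Nat.card {a // p a} + Nat.card {a // q a} := by
  classical
  rw [Nat.card_congr (subtypeOrEquiv p q fun r hp hq a hr => h a (hp a hr) (hq a hr)),
    Nat.card_sum]

theorem IsMaxMatchingOn.msize_eq [Fintype α] (hM : IsMaxMatchingOn E M) :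
    msize M = Nat.card {b // OddB E M b} + Nat.card {a // OddA E M a} +
      Nat.card {a // UnreachA E M a} := by
  have hsplit : msize M =
      Nat.card {a // ((M a).isSome ∧ EvenA E M a) ∨ OddA E M a ∨ UnreachA E M a} := by
    refine Nat.card_congr (Equiv.subtypeEquivRight fun a => ⟨fun hs => ?_, ?_⟩)
    · by_cases ha : EvenA E M a
      · exact Or.inl ⟨hs, ha⟩
      · by_cases ho : OddA E M a
        · exact Or.inr (Or.inl ho)
        · exact Or.inr (Or.inr ⟨ha, ho⟩)
    · rintro (⟨hs, -⟩ | ho | hu)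
      exacts [hs, hM.isSome_of_oddA ho, hu.isSome]
  have hmatchedEven : Nat.card {a // (M a).isSome ∧ EvenA E M a} = Nat.card {b // OddB E M b} :=
    hM.1.2.card_eq_card (fun _ h => h.1) (fun _ => hM.exists_eq_some_of_oddB)
      fun a b hab => by simp [hab, evenA_iff_oddB_of_eq_some hab]
  rw [hsplit, Nat.card_subtype_or_of_imp_not, Nat.card_subtype_or_of_imp_not, hmatchedEven,
    add_assoc]
  · exact fun a ho hu => hu.2 ho
  · rintro a ⟨-, ha⟩ (ho | hu)
    exacts [hM.not_evenA_of_oddA ho ha, hu.1 ha]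

end GallaiEdmonds

/-- Gallai–Edmonds matching structure: in any maximum matching, every odd vertex is
matched to an even vertex, every unreachable vertex is matched to an unreachable vertex,
and the size of the matching is |O| + |U|/2 (stated doubled to avoid division). -/
theorem gallai_edmonds_structure {α β : Type*} [Fintype α] [Fintype β]
    (E : α → β → Prop) (M : α → Option β) (hM : IsMaxMatchingOn E M) :
    (∀ a, OddA E M a → ∃ b, M a = some b ∧ EvenB E M b) ∧
    (∀ b, OddB E M b → ∃ a, M a = some b ∧ EvenA E M a) ∧
    (∀ a, UnreachA E M a → ∃ b, M a = some b ∧ UnreachB E M b) ∧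
    (∀ b, UnreachB E M b → ∃ a, M a = some b ∧ UnreachA E M a) ∧
    2 * msize M =
      2 * (Nat.card {a // OddA E M a} + Nat.card {b // OddB E M b}) +
        (Nat.card {a // UnreachA E M a} + Nat.card {b // UnreachB E M b}) := by
  have hmatching : IsMatching M := hM.1.2
  refine ⟨fun a ha => ?_, fun b hb => ?_, fun a ha => ?_, fun b hb => ?_, ?_⟩
  · obtain ⟨b, hab⟩ := Option.isSome_iff_exists.1 (hM.isSome_of_oddA ha)
    exact ⟨b, hab, (hmatching.evenB_iff_oddA hab).2 ha⟩
  · obtain ⟨a, hab⟩ := hM.exists_eq_some_of_oddB hb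
    exact ⟨a, hab, (evenA_iff_oddB_of_eq_some hab).2 hb⟩
  · obtain ⟨b, hab⟩ := Option.isSome_iff_exists.1 ha.isSome
    exact ⟨b, hab, (hmatching.unreachA_iff_unreachB hab).1 ha⟩
  · obtain ⟨a, hab⟩ := hb.exists_eq_some
    exact ⟨a, hab, (hmatching.unreachA_iff_unreachB hab).2 hb⟩
  · have hunreach : Nat.card {a // UnreachA E M a} = Nat.card {b // UnreachB E M b} :=
      hmatching.card_eq_card (fun _ => UnreachA.isSome) (fun _ => UnreachB.exists_eq_some)
        fun _ _ => hmatching.unreachA_iff_unreachB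
    rw [hM.msize_eq, ← hunreach]
    ring
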